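/- arXiv:1310.0933 — 6 statements merged into one kernel-verified Lean document; each statement's English description precedes it below -/
import Mathlib

section
/- In a Garside system of spindle type, for every pair of simple elements a, b ∈ S = Div(Δ), the right lcm a∨b and the left lcm a∨̃b lie in {a, b, Δ}. -/
/-- a left-divides b. -/
def LeftDvd {M : Type*} [Monoid M] (a b : M) : Prop := ∃ c : M, b = a * c

/-- a right-divides b. -/
def GRightDvd {M : Type*} [Monoid M] (a b : M) : Prop := ∃ c : M, b = c * a

/-- m is a right lcm of a and b. -/
def IsRightLcm {M : Type*} [Monoid M] (a b m : M) : Prop :=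
  LeftDvd a m ∧ LeftDvd b m ∧ ∀ x : M, LeftDvd a x → LeftDvd b x → LeftDvd m x

/-- m is a left lcm of a and b. -/
def IsLeftLcm {M : Type*} [Monoid M] (a b m : M) : Prop :=
  GRightDvd a m ∧ GRightDvd b m ∧ ∀ x : M, GRightDvd a x → GRightDvd b x → GRightDvd m x

/-- g is a left gcd of a and b. -/
def IsLeftGcd {M : Type*} [Monoid M] (a b g : M) : Prop :=
  LeftDvd g a ∧ LeftDvd g b ∧ ∀ x : M, LeftDvd x a → LeftDvd x b → LeftDvd x g

/-- g is a right gcd of a and b. -/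
def IsRightGcd {M : Type*} [Monoid M] (a b g : M) : Prop :=
  GRightDvd g a ∧ GRightDvd g b ∧ ∀ x : M, GRightDvd x a → GRightDvd x b → GRightDvd x g

/-- A monoid is Noetherian (atomic): the lengths of factorizations of any
    element into non-identity factors are bounded. -/
def NoetherianMonoid (M : Type*) [Monoid M] : Prop :=
  ∀ a : M, ∃ n : ℕ, ∀ l : List M, (∀ x ∈ l, x ≠ 1) → l.prod = a → l.length ≤ n

/-- A Garside monoid structure: a Noetherian cancellative monoid with right and
    left lcms, together with a balanced Garside element Δ whose (finite) set of
    divisors generates the monoid. -/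
structure GarsideMonoid (M : Type*) [Monoid M] where
  Δ : M
  noeth : NoetherianMonoid M
  cancel : ∀ a b b' c : M, a * b * c = a * b' * c → b = b'
  rlcm : ∀ a b : M, ∃ m : M, IsRightLcm a b m
  llcm : ∀ a b : M, ∃ m : M, IsLeftLcm a b m
  balanced : ∀ x : M, LeftDvd x Δ ↔ GRightDvd x Δ
  finS : {x : M | LeftDvd x Δ}.Finite
  genS : Submonoid.closure {x : M | LeftDvd x Δ} = ⊤

/-- The set of simple elements: divisors of the Garside element Δ. -/
def GarsideMonoid.S {M : Type*} [Monoid M] (gs : GarsideMonoid M) : Set M :=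
  {x : M | LeftDvd x gs.Δ}

/-- A Garside system is of spindle type if the left and right gcds of any
    two simple elements a, b lie in {a, b, 1}. -/
def GarsideMonoid.SpindleType {M : Type*} [Monoid M] (gs : GarsideMonoid M) : Prop :=
  (∀ a ∈ gs.S, ∀ b ∈ gs.S, ∀ g : M, IsLeftGcd a b g → g = a ∨ g = b ∨ g = 1) ∧
  (∀ a ∈ gs.S, ∀ b ∈ gs.S, ∀ g : M, IsRightGcd a b g → g = a ∨ g = b ∨ g = 1)

/-- x is an atom: non-identity and admitting no nontrivial factorization. -/
def IsAtomOf (M : Type*) [Monoid M] (x : M) : Prop :=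
  x ≠ 1 ∧ ∀ y z : M, x = y * z → y = 1 ∨ z = 1

/-!
Let `m = a ∨ b = a c = b d` and write `Δ = m g`. Then `c g = ∂a` and `d g = ∂b` are simple, and
the identity `ac = bd ⇒ ac = (a ∨ b)(c ∧̃ d)` applied to `a (c g) = b (d g)` shows that their right
gcd is `g`. By the spindle property `g ∈ {c g, d g, 1}`, i.e. `c = 1`, `d = 1` or `g = 1`, which
gives `m = a`, `m = b` or `m = Δ`. The left lcm is handled symmetrically.
-/

section Cancel

variable {M : Type*} [Monoid M] [IsCancelMul M] {a b c d m : M}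

theorem IsRightLcm.isRightGcd_mul (hm : IsRightLcm a b m) (hc : m = a * c) (hd : m = b * d)
    (g : M) : IsRightGcd (c * g) (d * g) g := by
  refine ⟨⟨c, rfl⟩, ⟨d, rfl⟩, fun x ⟨p, hp⟩ ⟨q, hq⟩ => ?_⟩
  have hap : m * g = a * p * x := by rw [hc, mul_assoc, hp, mul_assoc]
  have hbq : m * g = b * q * x := by rw [hd, mul_assoc, hq, mul_assoc]
  obtain ⟨e, he⟩ := hm.2.2 (a * p) ⟨p, rfl⟩ ⟨q, mul_right_cancel (hap.symm.trans hbq)⟩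
  exact ⟨e, mul_left_cancel (by rw [hap, he, mul_assoc])⟩

theorem IsLeftLcm.isLeftGcd_mul (hm : IsLeftLcm a b m) (hc : m = c * a) (hd : m = d * b)
    (g : M) : IsLeftGcd (g * c) (g * d) g := by
  refine ⟨⟨c, rfl⟩, ⟨d, rfl⟩, fun x ⟨p, hp⟩ ⟨q, hq⟩ => ?_⟩
  have hpa : g * m = x * (p * a) := by rw [hc, ← mul_assoc, hp, mul_assoc]
  have hqb : g * m = x * (q * b) := by rw [hd, ← mul_assoc, hq, mul_assoc]
  obtain ⟨e, he⟩ := hm.2.2 (p * a) ⟨p, rfl⟩ ⟨q, mul_left_cancel (hpa.symm.trans hqb)⟩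
  exact ⟨e, mul_right_cancel (by rw [hpa, he, mul_assoc])⟩

end Cancel

namespace GarsideMonoid

variable {M : Type*} [Monoid M] {gs : GarsideMonoid M} {a b m : M}

theorem isCancelMul (gs : GarsideMonoid M) : IsCancelMul M where
  mul_left_cancel x y y' h := gs.cancel x y y' 1 (by simpa using h)
  mul_right_cancel x y y' h := gs.cancel 1 y y' x (by simpa using h)

theorem SpindleType.isRightLcm_eq (hsp : gs.SpindleType) (ha : a ∈ gs.S) (hb : b ∈ gs.S)
    (hm : IsRightLcm a b m) : m = a ∨ m = b ∨ m = gs.Δ := by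
  have := gs.isCancelMul
  obtain ⟨⟨c, hc⟩, ⟨d, hd⟩, hmin⟩ := hm
  obtain ⟨g, hg⟩ := hmin gs.Δ ha hb
  have hcg : c * g ∈ gs.S := (gs.balanced _).mpr ⟨a, by rw [hg, hc, mul_assoc]⟩
  have hdg : d * g ∈ gs.S := (gs.balanced _).mpr ⟨b, by rw [hg, hd, mul_assoc]⟩
  rcases hsp.2 _ hcg _ hdg g (IsRightLcm.isRightGcd_mul ⟨⟨c, hc⟩, ⟨d, hd⟩, hmin⟩ hc hd g)
    with h | h | h
  · rw [eq_comm, mul_eq_right] at h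
    exact .inl (by rw [hc, h, mul_one])
  · rw [eq_comm, mul_eq_right] at h
    exact .inr (.inl (by rw [hd, h, mul_one]))
  · exact .inr (.inr (by rw [hg, h, mul_one]))

theorem SpindleType.isLeftLcm_eq (hsp : gs.SpindleType) (ha : a ∈ gs.S) (hb : b ∈ gs.S)
    (hm : IsLeftLcm a b m) : m = a ∨ m = b ∨ m = gs.Δ := by
  have := gs.isCancelMul
  obtain ⟨⟨c, hc⟩, ⟨d, hd⟩, hmin⟩ := hm
  obtain ⟨g, hg⟩ := hmin gs.Δ ((gs.balanced a).mp ha) ((gs.balanced b).mp hb)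
  have hgc : g * c ∈ gs.S := ⟨a, by rw [hg, hc, mul_assoc]⟩
  have hgd : g * d ∈ gs.S := ⟨b, by rw [hg, hd, mul_assoc]⟩
  rcases hsp.1 _ hgc _ hgd g (IsLeftLcm.isLeftGcd_mul ⟨⟨c, hc⟩, ⟨d, hd⟩, hmin⟩ hc hd g)
    with h | h | h
  · rw [eq_comm, mul_eq_left] at h
    exact .inl (by rw [hc, h, one_mul])
  · rw [eq_comm, mul_eq_left] at h
    exact .inr (.inl (by rw [hd, h, one_mul]))
  · exact .inr (.inr (by rw [hg, h, one_mul]))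

end GarsideMonoid

/-- In a Garside system of spindle type, for every pair of simple elements
    a, b the right lcm a∨b and the left lcm lie in {a, b, Δ}. -/
theorem stmt_4 {M : Type*} [Monoid M] (gs : GarsideMonoid M)
    (hsp : gs.SpindleType) :
    ∀ a ∈ gs.S, ∀ b ∈ gs.S,
      (∀ m : M, IsRightLcm a b m → m = a ∨ m = b ∨ m = gs.Δ) ∧
      (∀ m : M, IsLeftLcm a b m → m = a ∨ m = b ∨ m = gs.Δ) :=
  fun _ ha _ hb => ⟨fun _ => hsp.isRightLcm_eq ha hb, fun _ => hsp.isLeftLcm_eq ha hb⟩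
end

section
/- A Garside group of spindle type with atom set {a₁,…,aₙ} admits the presentation ⟨a₁,…,aₙ | a₁·∂(a₁) = a₂·∂(a₂) = … = aₙ·∂(aₙ)⟩, where ∂(aᵢ) denotes (a word representing) the right complement aᵢ\Δ. -/
/-
The atoms generate the positive monoid `P` (induction on the length function given by
Noetherianity), and in spindle type any two distinct atoms have right lcm `Δ`. So if two words in
the atoms have the same value in `P`, either they begin with the same atom, which cancels, or with
distinct atoms `aᵢ`, `aⱼ`; then both values are divisible by `Δ` and, by induction on the length,
the words are equivalent to `aᵢ ∂(aᵢ) r` and `aⱼ ∂(aⱼ) r`, which the relations identify. The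
resulting multiplicative map from `P` to the presented group extends to the group of fractions
`G = P⁻¹P`, and it inverts the natural map from the presented group onto `G`.
-/

/-- a left-divides b within the submonoid P of positive elements. -/
def LeftDvdIn {G : Type*} [Group G] (P : Submonoid G) (a b : G) : Prop :=
  ∃ c ∈ P, b = a * c

/-- a right-divides b within the submonoid P of positive elements. -/
def RightDvdIn {G : Type*} [Group G] (P : Submonoid G) (a b : G) : Prop :=
  ∃ c ∈ P, b = c * a

/-- m is a right lcm of a and b relative to P. -/
def IsRightLcmIn {G : Type*} [Group G] (P : Submonoid G) (a b m : G) : Prop :=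
  LeftDvdIn P a m ∧ LeftDvdIn P b m ∧
    ∀ x : G, LeftDvdIn P a x → LeftDvdIn P b x → LeftDvdIn P m x

/-- m is a left lcm of a and b relative to P. -/
def IsLeftLcmIn {G : Type*} [Group G] (P : Submonoid G) (a b m : G) : Prop :=
  RightDvdIn P a m ∧ RightDvdIn P b m ∧
    ∀ x : G, RightDvdIn P a x → RightDvdIn P b x → RightDvdIn P m x

/-- g is a left gcd of a and b relative to P. -/
def IsLeftGcdIn {G : Type*} [Group G] (P : Submonoid G) (a b g : G) : Prop :=
  LeftDvdIn P g a ∧ LeftDvdIn P g b ∧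
    ∀ x : G, LeftDvdIn P x a → LeftDvdIn P x b → LeftDvdIn P x g

/-- g is a right gcd of a and b relative to P. -/
def IsRightGcdIn {G : Type*} [Group G] (P : Submonoid G) (a b g : G) : Prop :=
  RightDvdIn P g a ∧ RightDvdIn P g b ∧
    ∀ x : G, RightDvdIn P x a → RightDvdIn P x b → RightDvdIn P x g

/-- A Garside group structure: a group G with a submonoid P of positive
    elements which is Noetherian, admits right and left lcms, has a balanced
    Garside element Δ with finitely many divisors, and such that G is the
    group of (left) fractions of P. -/
structure GarsideGroup (G : Type*) [Group G] where
  P : Submonoid G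
  Δ : G
  Δpos : Δ ∈ P
  noeth : ∀ a ∈ P, ∃ n : ℕ, ∀ l : List G,
    (∀ x ∈ l, x ∈ P ∧ x ≠ 1) → l.prod = a → l.length ≤ n
  rlcm : ∀ a ∈ P, ∀ b ∈ P, ∃ m ∈ P, IsRightLcmIn P a b m
  llcm : ∀ a ∈ P, ∀ b ∈ P, ∃ m ∈ P, IsLeftLcmIn P a b m
  balanced : ∀ x ∈ P, (LeftDvdIn P x Δ ↔ RightDvdIn P x Δ)
  finS : {x : G | x ∈ P ∧ LeftDvdIn P x Δ}.Finite
  fractions : ∀ g : G, ∃ x ∈ P, ∃ y ∈ P, g = x⁻¹ * y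

/-- The set of simple elements: positive divisors of Δ. -/
def GarsideGroup.S {G : Type*} [Group G] (gs : GarsideGroup G) : Set G :=
  {x : G | x ∈ gs.P ∧ LeftDvdIn gs.P x gs.Δ}

/-- Spindle type: left and right gcds of simple elements a, b lie in {a,b,1}. -/
def GarsideGroup.SpindleType {G : Type*} [Group G] (gs : GarsideGroup G) : Prop :=
  (∀ a ∈ gs.S, ∀ b ∈ gs.S, ∀ g : G, IsLeftGcdIn gs.P a b g → g = a ∨ g = b ∨ g = 1) ∧
  (∀ a ∈ gs.S, ∀ b ∈ gs.S, ∀ g : G, IsRightGcdIn gs.P a b g → g = a ∨ g = b ∨ g = 1)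

/-- The inner automorphism τ(x) = Δ⁻¹xΔ. -/
def GarsideGroup.τ {G : Type*} [Group G] (gs : GarsideGroup G) (x : G) : G :=
  gs.Δ⁻¹ * x * gs.Δ

/-- (p, s) is the left normal form data of b: b = Δ^p·s₁⋯sₗ, each sᵢ a proper
    simple element with sᵢ = Δ ∧ (sᵢ⋯sₗ) (the left-greedy condition). -/
def IsLNF {G : Type*} [Group G] (gs : GarsideGroup G) (b : G) (p : ℤ)
    (s : List G) : Prop :=
  b = gs.Δ ^ p * s.prod ∧
  (∀ x ∈ s, x ∈ gs.S ∧ x ≠ 1 ∧ x ≠ gs.Δ) ∧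
  ∀ i : ℕ, ∀ h : i < s.length,
    IsLeftGcdIn gs.P gs.Δ ((s.drop i).prod) (s.get ⟨i, h⟩)

/-- Rigidity of an element with left normal form Δ^p·s₁⋯sₗ:
    τ^{-p}(s₁) ∧ ∂(sₗ) = 1, where τ^{-p}(s₁) = Δ^p s₁ Δ^{-p} and
    ∂(sₗ) = sₗ⁻¹Δ. -/
def IsRigid {G : Type*} [Group G] (gs : GarsideGroup G) (p : ℤ)
    (s : List G) : Prop :=
  s ≠ [] ∧ IsLeftGcdIn gs.P (gs.Δ ^ p * (s.head?.getD 1) * gs.Δ ^ (-p))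
    ((s.getLast?.getD 1)⁻¹ * gs.Δ) 1

/-- x is an atom of the positive monoid P. -/
def IsAtomIn {G : Type*} [Group G] (P : Submonoid G) (x : G) : Prop :=
  x ∈ P ∧ x ≠ 1 ∧ ∀ y ∈ P, ∀ z ∈ P, x = y * z → y = 1 ∨ z = 1

section Fractions

variable {G H : Type*} [Group G] [Group H] {P : Submonoid G}

theorem Submonoid.inv_mul_eq_inv_mul_of_map_mul (hfrac : ∀ g : G, ∃ x ∈ P, ∃ y ∈ P, g = x⁻¹ * y)
    {f : G → H} (hf : ∀ x ∈ P, ∀ y ∈ P, f (x * y) = f x * f y)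
    {x y u v : G} (hx : x ∈ P) (hy : y ∈ P) (hu : u ∈ P) (hv : v ∈ P)
    (h : x⁻¹ * y = u⁻¹ * v) : (f x)⁻¹ * f y = (f u)⁻¹ * f v := by
  obtain ⟨z, hz, w, hw, hzw⟩ := hfrac (x * u⁻¹)
  have hzx : z * x = w * u := calc
    z * x = z * (x * u⁻¹) * u := by group
    _ = w * u := by rw [hzw]; group
  have hzy : z * y = w * v := calc
    z * y = z * x * (x⁻¹ * y) := by group
    _ = w * v := by rw [hzx, h]; group
  calc (f x)⁻¹ * f y = (f z * f x)⁻¹ * (f z * f y) := by group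
    _ = (f w * f u)⁻¹ * (f w * f v) := by
      rw [← hf z hz x hx, ← hf z hz y hy, hzx, hzy, hf w hw u hu, hf w hw v hv]
    _ = (f u)⁻¹ * f v := by group

/-- The left Ore condition needed to multiply fractions is itself a consequence of `G = P⁻¹P`. -/
theorem Submonoid.exists_monoidHom_extend_of_fractions
    (hfrac : ∀ g : G, ∃ x ∈ P, ∃ y ∈ P, g = x⁻¹ * y)
    (f : G → H) (hf : ∀ x ∈ P, ∀ y ∈ P, f (x * y) = f x * f y) :
    ∃ F : G →* H, ∀ p ∈ P, F p = f p := by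
  have hf1 : f 1 = 1 := by simpa using hf 1 P.one_mem 1 P.one_mem
  choose x hx y hy hxy using id hfrac
  have hF : ∀ g, ∀ u ∈ P, ∀ v ∈ P, g = u⁻¹ * v → (f (x g))⁻¹ * f (y g) = (f u)⁻¹ * f v :=
    fun g u hu v hv hg ↦ P.inv_mul_eq_inv_mul_of_map_mul hfrac hf (hx g) (hy g) hu hv
      ((hxy g).symm.trans hg)
  refine ⟨MonoidHom.mk' (fun g ↦ (f (x g))⁻¹ * f (y g)) fun g h ↦ ?_, fun p hp ↦ ?_⟩
  · obtain ⟨c, hc, d, hd, hcd⟩ := hfrac (y g * (x h)⁻¹)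
    have hcy : c * y g = d * x h := calc
      c * y g = c * (y g * (x h)⁻¹) * x h := by group
      _ = d * x h := by rw [hcd]; group
    have hgh : g * h = (c * x g)⁻¹ * (d * y h) := calc
      g * h = (x g)⁻¹ * y g * ((x h)⁻¹ * y h) := by rw [← hxy g, ← hxy h]
      _ = (x g)⁻¹ * c⁻¹ * (c * y g) * (x h)⁻¹ * y h := by group
      _ = (c * x g)⁻¹ * (d * y h) := by rw [hcy]; group
    have hfcd : (f c)⁻¹ * f d = f (y g) * (f (x h))⁻¹ := by
      rw [inv_mul_eq_iff_eq_mul, ← mul_assoc, ← hf c hc _ (hy g), hcy, hf d hd _ (hx h)]; group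
    calc (f (x (g * h)))⁻¹ * f (y (g * h))
        = (f (c * x g))⁻¹ * f (d * y h) :=
          hF _ _ (P.mul_mem hc (hx g)) _ (P.mul_mem hd (hy h)) hgh
      _ = (f (x g))⁻¹ * ((f c)⁻¹ * f d) * f (y h) := by
          rw [hf c hc _ (hx g), hf d hd _ (hy h)]; group
      _ = (f (x g))⁻¹ * f (y g) * ((f (x h))⁻¹ * f (y h)) := by rw [hfcd]; group
  · rw [MonoidHom.mk'_apply, hF p 1 P.one_mem p hp (by group), hf1, inv_one, one_mul]

theorem Submonoid.monoidHom_ext_of_fractions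
    (hfrac : ∀ g : G, ∃ x ∈ P, ∃ y ∈ P, g = x⁻¹ * y) {F₁ F₂ : G →* H}
    (h : ∀ p ∈ P, F₁ p = F₂ p) : F₁ = F₂ := by
  ext g
  obtain ⟨x, hx, y, hy, rfl⟩ := hfrac g
  simp only [map_mul, map_inv, h x hx, h y hy]

end Fractions

section Lcm

variable {G : Type*} [Group G] {P : Submonoid G} {x y m : G}

theorem IsRightLcmIn.symm (h : IsRightLcmIn P x y m) : IsRightLcmIn P y x m :=
  ⟨h.2.1, h.1, fun z hx hy ↦ h.2.2 z hy hx⟩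

theorem IsRightLcmIn.ne_left (h : IsRightLcmIn P x y m) (hx : IsAtomIn P x)
    (hy : IsAtomIn P y) (hxy : x ≠ y) : m ≠ x := by
  rintro rfl
  obtain ⟨y', hy', hm⟩ := h.2.1
  rcases hx.2.2 y hy.1 y' hy' hm with h1 | h1
  · exact hy.2.1 h1
  · exact hxy (by rw [hm, h1, mul_one])

theorem IsRightLcmIn.isRightGcdIn (h : IsRightLcmIn P x y m) {d dx dy c : G}
    (hdx : d = x * dx) (hdy : d = y * dy) (hdc : d = m * c) : IsRightGcdIn P dx dy c := by
  obtain ⟨x', hx', hmx⟩ := h.1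
  obtain ⟨y', hy', hmy⟩ := h.2.1
  refine ⟨⟨x', hx', mul_left_cancel (a := x) ?_⟩, ⟨y', hy', mul_left_cancel (a := y) ?_⟩, ?_⟩
  · rw [← hdx, hdc, hmx, mul_assoc]
  · rw [← hdy, hdc, hmy, mul_assoc]
  rintro z ⟨u, hu, rfl⟩ ⟨v, hv, rfl⟩
  have hxu : x * u = y * v := mul_right_cancel (b := z) (by rw [mul_assoc, mul_assoc, ← hdx, ← hdy])
  obtain ⟨w, hw, hmw⟩ := h.2.2 (x * u) ⟨u, hu, rfl⟩ ⟨v, hv, hxu⟩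
  exact ⟨w, hw, mul_left_cancel (a := m) (by rw [← hdc, hdx, ← mul_assoc, hmw, mul_assoc])⟩

end Lcm

namespace GarsideGroup

variable {G : Type*} [Group G] (gs : GarsideGroup G)

/-- For `p ∈ P`, the length of a longest factorization of `p` into nontrivial positive elements,
which exists by `gs.noeth`. -/
noncomputable def norm (p : G) : ℕ :=
  sInf {n | ∀ l : List G, (∀ x ∈ l, x ∈ gs.P ∧ x ≠ 1) → l.prod = p → l.length ≤ n}

variable {gs}

theorem length_le_norm {p : G} (hp : p ∈ gs.P) {l : List G} (hl : ∀ x ∈ l, x ∈ gs.P ∧ x ≠ 1)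
    (hlp : l.prod = p) : l.length ≤ gs.norm p :=
  Nat.sInf_mem (gs.noeth p hp) l hl hlp

theorem exists_length_eq_norm {p : G} (hp : p ∈ gs.P) :
    ∃ l : List G, (∀ x ∈ l, x ∈ gs.P ∧ x ≠ 1) ∧ l.prod = p ∧ l.length = gs.norm p := by
  by_contra! h
  have hlt : ∀ l : List G, (∀ x ∈ l, x ∈ gs.P ∧ x ≠ 1) → l.prod = p → l.length < gs.norm p :=
    fun l hl hlp ↦ (length_le_norm hp hl hlp).lt_of_ne (h l hl hlp)
  have hzero : gs.norm p = 0 := by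
    have : gs.norm p ≤ gs.norm p - 1 := Nat.sInf_le fun l hl hlp ↦ by
      have := hlt l hl hlp; omega
    omega
  by_cases hp1 : p = 1
  · exact absurd (hlt [] (by simp) hp1.symm) (by omega)
  · exact absurd (hlt [p] (by simpa using ⟨hp, hp1⟩) (by simp)) (by omega)

theorem norm_add_norm_le {x y : G} (hx : x ∈ gs.P) (hy : y ∈ gs.P) :
    gs.norm x + gs.norm y ≤ gs.norm (x * y) := by
  obtain ⟨lx, hlx, rfl, hnx⟩ := exists_length_eq_norm hx
  obtain ⟨ly, hly, rfl, hny⟩ := exists_length_eq_norm hy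
  rw [← hnx, ← hny, ← List.length_append, ← List.prod_append]
  exact length_le_norm (List.prod_append (l₁ := lx) ▸ gs.P.mul_mem hx hy)
    (fun z hz ↦ (List.mem_append.mp hz).elim (hlx z) (hly z)) rfl

theorem norm_one : gs.norm 1 = 0 := by
  have := norm_add_norm_le (gs := gs) gs.P.one_mem gs.P.one_mem
  rw [one_mul] at this
  omega

theorem one_le_norm {p : G} (hp : p ∈ gs.P) (hp1 : p ≠ 1) : 1 ≤ gs.norm p :=
  length_le_norm hp (l := [p]) (by simpa using ⟨hp, hp1⟩) (by simp)

theorem norm_lt_norm_mul {x y : G} (hx : x ∈ gs.P) (hx1 : x ≠ 1) (hy : y ∈ gs.P) :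
    gs.norm y < gs.norm (x * y) :=
  (Nat.lt_add_of_pos_left (one_le_norm hx hx1)).trans_le (norm_add_norm_le hx hy)

theorem eq_nil_of_prod_eq_one {l : List G} (hl : ∀ x ∈ l, x ∈ gs.P ∧ x ≠ 1) (h : l.prod = 1) :
    l = [] :=
  List.eq_nil_of_length_eq_zero <|
    Nat.le_zero.mp (norm_one (gs := gs) ▸ length_le_norm gs.P.one_mem hl h)

section Atoms

variable {ι : Type*} {a : ι → G}

theorem exists_list_map_prod_eq (hall : ∀ x : G, IsAtomIn gs.P x → ∃ i, x = a i)
    {p : G} (hp : p ∈ gs.P) : ∃ w : List ι, (w.map a).prod = p := by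
  induction hN : gs.norm p using Nat.strong_induction_on generalizing p with
  | _ N ih =>
  by_cases hp1 : p = 1
  · exact ⟨[], by simp [hp1]⟩
  by_cases hat : IsAtomIn gs.P p
  · obtain ⟨i, rfl⟩ := hall p hat
    exact ⟨[i], by simp⟩
  obtain ⟨y, hy, z, hz, rfl, hy1, hz1⟩ : ∃ y ∈ gs.P, ∃ z ∈ gs.P, p = y * z ∧ y ≠ 1 ∧ z ≠ 1 := by
    simpa [IsAtomIn, hp, hp1] using hat
  have hsum := norm_add_norm_le hy hz
  obtain ⟨wy, rfl⟩ := ih _ (hN ▸ hsum.trans_lt' (by have := one_le_norm hz hz1; omega)) hy rfl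
  obtain ⟨wz, rfl⟩ := ih _ (hN ▸ hsum.trans_lt' (by have := one_le_norm hy hy1; omega)) hz rfl
  exact ⟨wy ++ wz, by simp⟩

theorem list_map_prod_mem (ha : ∀ i, a i ∈ gs.P) (w : List ι) : (w.map a).prod ∈ gs.P :=
  gs.P.list_prod_mem fun _ hx ↦ by
    obtain ⟨i, -, rfl⟩ := List.mem_map.mp hx
    exact ha i

theorem list_map_prod_eq_nil (hatom : ∀ i, IsAtomIn gs.P (a i))
    {u : List ι} (hu : (u.map a).prod = 1) : u = [] :=
  List.map_eq_nil_iff.mp <| eq_nil_of_prod_eq_one (gs := gs)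
    (fun _ hx ↦ by obtain ⟨i, -, rfl⟩ := List.mem_map.mp hx; exact ⟨(hatom i).1, (hatom i).2.1⟩) hu

end Atoms

end GarsideGroup

namespace GarsideGroup.SpindleType

variable {G : Type*} [Group G] {gs : GarsideGroup G}

/-- The right gcd of the complements `x⁻¹Δ`, `y⁻¹Δ` is one of them or `1`; it cannot be one of
them, for then the lcm of `x` and `y` would be an atom. -/
theorem isRightLcmIn_delta (hsp : gs.SpindleType) {x y : G} (hx : IsAtomIn gs.P x)
    (hy : IsAtomIn gs.P y) (hxy : x ≠ y)
    (hxΔ : LeftDvdIn gs.P x gs.Δ) (hyΔ : LeftDvdIn gs.P y gs.Δ) : IsRightLcmIn gs.P x y gs.Δ := by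
  obtain ⟨m, -, hlcm⟩ := gs.rlcm x hx.1 y hy.1
  obtain ⟨dx, hdx, hΔx⟩ := hxΔ
  obtain ⟨dy, hdy, hΔy⟩ := hyΔ
  obtain ⟨c, hc, hΔc⟩ := hlcm.2.2 gs.Δ ⟨dx, hdx, hΔx⟩ ⟨dy, hdy, hΔy⟩
  have hgcd := hlcm.isRightGcdIn hΔx hΔy hΔc
  have hdxS : dx ∈ gs.S := ⟨hdx, (gs.balanced dx hdx).mpr ⟨x, hx.1, hΔx⟩⟩
  have hdyS : dy ∈ gs.S := ⟨hdy, (gs.balanced dy hdy).mpr ⟨y, hy.1, hΔy⟩⟩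
  rcases hsp.2 dx hdxS dy hdyS c hgcd with rfl | rfl | rfl
  · exact absurd (mul_right_cancel (hΔx.symm.trans hΔc)).symm (hlcm.ne_left hx hy hxy)
  · exact absurd (mul_right_cancel (hΔy.symm.trans hΔc)).symm (hlcm.symm.ne_left hy hx hxy.symm)
  · rwa [hΔc, mul_one]

variable {ι : Type*} {a : ι → G} {Dw : ι → List ι}

theorem list_map_prod_eq_of_relations (hsp : gs.SpindleType) (ha : Function.Injective a)
    (hatom : ∀ i, IsAtomIn gs.P (a i)) (hall : ∀ x : G, IsAtomIn gs.P x → ∃ i, x = a i)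
    (hDw : ∀ i, ((Dw i).map a).prod = (a i)⁻¹ * gs.Δ)
    {M : Type*} [Monoid M] (b : ι → M)
    (hb : ∀ i j, b i * ((Dw i).map b).prod = b j * ((Dw j).map b).prod)
    {u v : List ι} (huv : (u.map a).prod = (v.map a).prod) :
    (u.map b).prod = (v.map b).prod := by
  have haP i : a i ∈ gs.P := (hatom i).1
  induction hN : gs.norm (u.map a).prod using Nat.strong_induction_on generalizing u v with
  | _ N ih =>
  rcases u with _ | ⟨i, u'⟩ <;> rcases v with _ | ⟨j, v'⟩
  · rfl
  · cases list_map_prod_eq_nil hatom huv.symm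
  · cases list_map_prod_eq_nil hatom huv
  simp only [List.map_cons, List.prod_cons] at huv hN ⊢
  have hu' : gs.norm (u'.map a).prod < N :=
    hN ▸ norm_lt_norm_mul (haP i) (hatom i).2.1 (list_map_prod_mem haP u')
  have hv' : gs.norm (v'.map a).prod < N :=
    hN ▸ huv ▸ norm_lt_norm_mul (haP j) (hatom j).2.1 (list_map_prod_mem haP v')
  by_cases hij : i = j
  · subst hij
    rw [ih _ hu' (mul_left_cancel huv) rfl]
  have hΔ k : LeftDvdIn gs.P (a k) gs.Δ :=
    ⟨_, list_map_prod_mem haP (Dw k), by rw [hDw, mul_inv_cancel_left]⟩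
  obtain ⟨r, hr, hp⟩ := (hsp.isRightLcmIn_delta (hatom i) (hatom j) (ha.ne hij) (hΔ i) (hΔ j)).2.2
    _ ⟨_, list_map_prod_mem haP u', rfl⟩ ⟨_, list_map_prod_mem haP v', huv⟩
  obtain ⟨wr, rfl⟩ := exists_list_map_prod_eq hall hr
  have hcompl k (w : List ι) (hw : a k * (w.map a).prod = gs.Δ * (wr.map a).prod) :
      ((Dw k ++ wr).map a).prod = (w.map a).prod :=
    mul_left_cancel (a := a k) (by rw [hw, List.map_append, List.prod_append, hDw, mul_assoc,
      mul_inv_cancel_left])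
  have hbu := ih _ hu' (hcompl i u' hp).symm rfl
  have hbv := ih _ hv' (hcompl j v' (huv ▸ hp)).symm rfl
  simp only [List.map_append, List.prod_append] at hbu hbv
  rw [hbu, hbv, ← mul_assoc, ← mul_assoc, hb]

theorem exists_map_of_relations (hsp : gs.SpindleType) (ha : Function.Injective a)
    (hatom : ∀ i, IsAtomIn gs.P (a i)) (hall : ∀ x : G, IsAtomIn gs.P x → ∃ i, x = a i)
    (hDw : ∀ i, ((Dw i).map a).prod = (a i)⁻¹ * gs.Δ)
    {M : Type*} [Monoid M] (b : ι → M)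
    (hb : ∀ i j, b i * ((Dw i).map b).prod = b j * ((Dw j).map b).prod) :
    ∃ f : G → M, (∀ w : List ι, f (w.map a).prod = (w.map b).prod) ∧
      ∀ x ∈ gs.P, ∀ y ∈ gs.P, f (x * y) = f x * f y := by
  classical
  let f (g : G) : M := if h : ∃ w : List ι, (w.map a).prod = g then (h.choose.map b).prod else 1
  have hf (w : List ι) : f (w.map a).prod = (w.map b).prod := by
    have h : ∃ w' : List ι, (w'.map a).prod = (w.map a).prod := ⟨w, rfl⟩
    simp only [f, dif_pos h]
    exact list_map_prod_eq_of_relations hsp ha hatom hall hDw b hb h.choose_spec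
  refine ⟨f, hf, fun x hx y hy ↦ ?_⟩
  obtain ⟨wx, rfl⟩ := exists_list_map_prod_eq hall hx
  obtain ⟨wy, rfl⟩ := exists_list_map_prod_eq hall hy
  rw [← List.prod_append, ← List.map_append, hf, hf, hf, List.map_append, List.prod_append]

end GarsideGroup.SpindleType

/-- A Garside group of spindle type with atoms a₁,…,aₙ admits the presentation
    ⟨a₁,…,aₙ | a₁·∂(a₁) = ⋯ = aₙ·∂(aₙ)⟩ where ∂(aᵢ) = aᵢ⁻¹Δ is the right
    complement, represented by the word Dw i over the atoms. -/
theorem stmt_8 {G : Type*} [Group G] (gs : GarsideGroup G)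
    (hsp : gs.SpindleType) (n : ℕ) (a : Fin n → G)
    (ha : Function.Injective a) (hatom : ∀ i, IsAtomIn gs.P (a i))
    (hall : ∀ x : G, IsAtomIn gs.P x → ∃ i, x = a i)
    (Dw : Fin n → List (Fin n))
    (hDw : ∀ i, ((Dw i).map a).prod = (a i)⁻¹ * gs.Δ) :
    ∃ e : PresentedGroup {r : FreeGroup (Fin n) |
        ∃ i j : Fin n,
          r = (FreeGroup.of i * ((Dw i).map FreeGroup.of).prod) *
            (FreeGroup.of j * ((Dw j).map FreeGroup.of).prod)⁻¹} ≃* G,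
      ∀ i : Fin n, e (PresentedGroup.of i) = a i := by
  set rels := {r : FreeGroup (Fin n) | ∃ i j : Fin n,
    r = (FreeGroup.of i * ((Dw i).map FreeGroup.of).prod) *
      (FreeGroup.of j * ((Dw j).map FreeGroup.of).prod)⁻¹}
  have hrels : ∀ r ∈ rels, FreeGroup.lift a r = 1 := by
    rintro r ⟨i, j, rfl⟩
    simp [map_list_prod, Function.comp_def, hDw]
  set φ := PresentedGroup.toGroup hrels
  have hφ (w : List (Fin n)) : φ (w.map PresentedGroup.of).prod = (w.map a).prod := by
    simp [map_list_prod, Function.comp_def, φ, PresentedGroup.toGroup.of]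
  have hmk (i : Fin n) : PresentedGroup.of i * ((Dw i).map PresentedGroup.of).prod =
      PresentedGroup.mk rels (FreeGroup.of i * ((Dw i).map FreeGroup.of).prod) := by
    rw [map_mul, map_list_prod, List.map_map]
    rfl
  obtain ⟨ψ, hψ, hψmul⟩ := hsp.exists_map_of_relations ha hatom hall hDw PresentedGroup.of
    fun i j ↦ by rw [hmk, hmk]; exact PresentedGroup.mk_eq_mk_of_mul_inv_mem ⟨i, j, rfl⟩
  obtain ⟨F, hF⟩ := gs.P.exists_monoidHom_extend_of_fractions gs.fractions ψ hψmul
  refine ⟨φ.toMulEquiv F ?_ ?_, fun i ↦ PresentedGroup.toGroup.of hrels⟩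
  · refine PresentedGroup.ext fun i ↦ ?_
    rw [MonoidHom.comp_apply, PresentedGroup.toGroup.of, hF _ (hatom i).1]
    simpa using hψ [i]
  · refine gs.P.monoidHom_ext_of_fractions gs.fractions fun p hp ↦ ?_
    obtain ⟨w, rfl⟩ := GarsideGroup.exists_list_map_prod_eq hall hp
    simp [hF _ hp, hψ, hφ]
end

section
/- In a homogeneous Garside system of spindle type, if simple elements c, c', d, e satisfy c·d = c'·e with c' = Δ ∧ (c·d) (left-greedy rewriting of the pair (c,d)), then max(|c'|, |e|) ≥ max(|c|, |d|), where |·| denotes the common length of all positive words representing an element. -/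
/-! Write `Δ = c t` and `c' = c x`; cancelling `c` in `c d = c' e` and `Δ = c' u` gives
`d = x e` and `t = x u`. If `x = 1` the pair is unchanged. Otherwise the simple elements `d` and
`t = ∂(c)` have the nontrivial common left divisor `x`, so by spindle type their left gcd is `d` or
`t`. If `d` divides `∂(c)` then `c d` is simple and the rewriting is `(c d, 1)`; if `∂(c)` divides
`d` then `Δ` divides `c d`, so `c' = Δ`, whose length bounds those of `c` and `d`. -/

/-- The homogeneity of a Garside system: `len p` is the common length of all atom words for `p`. -/
def IsAtomLength {M : Type*} [Monoid M] (len : M → ℕ) : Prop :=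
  ∀ l : List M, (∀ x ∈ l, IsAtomOf M x) → len l.prod = l.length

namespace NoetherianMonoid

variable {M : Type*} [Monoid M]

theorem exists_atoms_prod_eq_of_length_le (n : ℕ) (a : M)
    (h : ∀ l : List M, (∀ x ∈ l, x ≠ 1) → l.prod = a → l.length ≤ n) :
    ∃ l : List M, (∀ x ∈ l, IsAtomOf M x) ∧ l.prod = a := by
  induction n generalizing a with
  | zero =>
    refine ⟨[], by simp, ?_⟩
    by_contra ha
    simpa using h [a] (by simpa [eq_comm] using ha) (by simp)
  | succ n ih =>
    by_cases ha : a = 1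
    · exact ⟨[], by simp, by simp [ha]⟩
    by_cases hat : IsAtomOf M a
    · exact ⟨[a], by simp [hat], by simp⟩
    obtain ⟨y, z, rfl, hy, hz⟩ : ∃ y z, a = y * z ∧ y ≠ 1 ∧ z ≠ 1 := by
      simpa [IsAtomOf, ha] using hat
    obtain ⟨ly, hly, rfl⟩ := ih y fun l hl hp => by
      simpa using h (l ++ [z]) (by simpa [or_imp, forall_and] using ⟨hl, hz⟩) (by simp [hp])
    obtain ⟨lz, hlz, rfl⟩ := ih z fun l hl hp => by
      simpa using h (ly.prod :: l) (by simpa using ⟨hy, hl⟩) (by simp [hp])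
    exact ⟨ly ++ lz, by simpa [or_imp, forall_and] using ⟨hly, hlz⟩, List.prod_append⟩

theorem exists_atoms_prod_eq (hM : NoetherianMonoid M) (a : M) :
    ∃ l : List M, (∀ x ∈ l, IsAtomOf M x) ∧ l.prod = a :=
  let ⟨n, hn⟩ := hM a
  exists_atoms_prod_eq_of_length_le n a hn

/-- Otherwise `u v u v ⋯ u v` would be arbitrarily long factorizations of `1`. -/
theorem eq_one_of_mul_eq_one (hM : NoetherianMonoid M) {u v : M} (h : u * v = 1) : u = 1 := by
  by_contra hu
  have hv : v ≠ 1 := fun hv => hu (by simpa [hv] using h)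
  obtain ⟨n, hn⟩ := hM 1
  have := hn (List.replicate (n + 1) [u, v]).flatten (by simp [hu, hv])
    (by simp [List.prod_flatten, h])
  simp at this
  omega

end NoetherianMonoid

namespace IsAtomLength

variable {M : Type*} [Monoid M] {len : M → ℕ} (hlen : IsAtomLength len) (hM : NoetherianMonoid M)
include hlen

theorem map_one : len 1 = 0 := by
  simpa using hlen [] (by simp)

include hM

theorem map_mul (a b : M) : len (a * b) = len a + len b := by
  obtain ⟨la, hla, rfl⟩ := hM.exists_atoms_prod_eq a
  obtain ⟨lb, hlb, rfl⟩ := hM.exists_atoms_prod_eq b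
  rw [← List.prod_append, hlen _ hla, hlen _ hlb,
    hlen _ (by simpa [or_imp, forall_and] using ⟨hla, hlb⟩), List.length_append]

theorem eq_one_of_eq_zero {a : M} (h : len a = 0) : a = 1 := by
  obtain ⟨l, hl, rfl⟩ := hM.exists_atoms_prod_eq a
  rw [hlen l hl, List.length_eq_zero_iff] at h
  simp [h]

theorem le_of_leftDvd {a b : M} (h : LeftDvd a b) : len a ≤ len b := by
  obtain ⟨u, rfl⟩ := h
  rw [hlen.map_mul hM]
  omega

end IsAtomLength

namespace GarsideMonoid

variable {M : Type*} [Monoid M] (gs : GarsideMonoid M)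
include gs

theorem mul_left_cancel {a b b' : M} (h : a * b = a * b') : b = b' :=
  gs.cancel a b b' 1 (by simpa using h)

theorem leftDvd_antisymm {a b : M} (hab : LeftDvd a b) (hba : LeftDvd b a) : a = b := by
  obtain ⟨u, rfl⟩ := hab
  obtain ⟨v, hv⟩ := hba
  have huv : u * v = 1 := gs.mul_left_cancel (by rw [mul_one, ← mul_assoc, ← hv])
  rw [gs.noeth.eq_one_of_mul_eq_one huv, mul_one]

theorem isLeftGcd_eq_left {a b g : M} (h : IsLeftGcd a b g) (hab : LeftDvd a b) : g = a :=
  gs.leftDvd_antisymm h.1 (h.2.2 a ⟨1, (mul_one a).symm⟩ hab)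

theorem isLeftGcd_eq_right {a b g : M} (h : IsLeftGcd a b g) (hba : LeftDvd b a) : g = b :=
  gs.leftDvd_antisymm h.2.1 (h.2.2 b hba ⟨1, (mul_one b).symm⟩)

/-- The gcd is a common divisor of maximal length: its right lcm with any other common divisor
is again a common divisor, hence no longer, hence equal to it. -/
theorem exists_isLeftGcd {len : M → ℕ} (hlen : IsAtomLength len) (a b : M) :
    ∃ g, IsLeftGcd a b g := by
  classical
  let P : ℕ → Prop := fun k => ∃ s, LeftDvd s a ∧ LeftDvd s b ∧ len s = k
  have hP0 : P 0 := ⟨1, ⟨a, (one_mul a).symm⟩, ⟨b, (one_mul b).symm⟩, hlen.map_one⟩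
  obtain ⟨g, hga, hgb, hg⟩ := Nat.findGreatest_spec (Nat.zero_le (len a)) hP0
  refine ⟨g, hga, hgb, fun s hsa hsb => ?_⟩
  obtain ⟨m, ⟨u, rfl⟩, hsm, hm⟩ := gs.rlcm g s
  have hma : LeftDvd (g * u) a := hm a hga hsa
  have hlen_le : len (g * u) ≤ len g :=
    hg ▸ Nat.le_findGreatest (hlen.le_of_leftDvd gs.noeth hma) ⟨g * u, hma, hm b hgb hsb, rfl⟩
  rw [hlen.map_mul gs.noeth] at hlen_le
  rwa [hlen.eq_one_of_eq_zero gs.noeth (by omega : len u = 0), mul_one] at hsm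

end GarsideMonoid

theorem GarsideMonoid.SpindleType.leftDvd_or_leftDvd {M : Type*} [Monoid M]
    {gs : GarsideMonoid M} (hsp : gs.SpindleType) {len : M → ℕ} (hlen : IsAtomLength len)
    {a b x : M} (ha : a ∈ gs.S) (hb : b ∈ gs.S) (hx : x ≠ 1)
    (hxa : LeftDvd x a) (hxb : LeftDvd x b) : LeftDvd a b ∨ LeftDvd b a := by
  obtain ⟨g, hg⟩ := gs.exists_isLeftGcd hlen a b
  rcases hsp.1 a ha b hb g hg with rfl | rfl | rfl
  · exact Or.inl hg.2.1
  · exact Or.inr hg.1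
  · obtain ⟨v, hv⟩ := hg.2.2 x hxa hxb
    exact absurd (gs.noeth.eq_one_of_mul_eq_one hv.symm) hx

theorem stmt_9_general {M : Type*} [Monoid M] (gs : GarsideMonoid M)
    (hsp : gs.SpindleType)
    (len : M → ℕ)
    (hlen : ∀ l : List M, (∀ x ∈ l, IsAtomOf M x) → len l.prod = l.length)
    (c d c' e : M) (hc : c ∈ gs.S) (hd : d ∈ gs.S)
    (hcd : c * d = c' * e)
    (hgreedy : IsLeftGcd gs.Δ (c * d) c') :
    max (len c) (len d) ≤ max (len c') (len e) := by
  replace hlen : IsAtomLength len := hlen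
  obtain ⟨t, ht⟩ := hc
  obtain ⟨x, hx⟩ := hgreedy.2.2 c ⟨t, ht⟩ ⟨d, rfl⟩
  obtain ⟨u, hu⟩ := hgreedy.1
  have hde : d = x * e := gs.mul_left_cancel (by rw [← mul_assoc, ← hx, hcd])
  have htu : t = x * u := gs.mul_left_cancel (by rw [← ht, hu, hx, mul_assoc])
  by_cases hx1 : x = 1
  · simp [hx, hde, hx1]
  have htS : t ∈ gs.S := (gs.balanced t).mpr ⟨c, ht⟩
  rcases hsp.leftDvd_or_leftDvd hlen hd htS hx1 ⟨e, hde⟩ ⟨u, htu⟩ with ⟨s, hs⟩ | ⟨s, hs⟩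
  · have hc' : c' = c * d := gs.isLeftGcd_eq_right hgreedy ⟨s, by rw [ht, hs, mul_assoc]⟩
    rw [hc', hlen.map_mul gs.noeth]
    omega
  · have hc' : c' = gs.Δ := gs.isLeftGcd_eq_left hgreedy ⟨s, by rw [hs, ← mul_assoc, ← ht]⟩
    have hcΔ := hlen.le_of_leftDvd gs.noeth ⟨t, ht⟩
    have hdΔ := hlen.le_of_leftDvd gs.noeth hd
    rw [hc']
    omega

/-- In a homogeneous Garside system of spindle type (homogeneity is expressed
    by a length function `len` assigning to each positive element the common
    length of all its representing words over the atoms): if simple elements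
    c, d, c', e satisfy c·d = c'·e with c' = Δ ∧ (c·d) (left-greedy rewriting),
    then max(|c'|, |e|) ≥ max(|c|, |d|). -/
theorem stmt_9 {M : Type*} [Monoid M] (gs : GarsideMonoid M)
    (hsp : gs.SpindleType)
    (len : M → ℕ)
    (hlen : ∀ l : List M, (∀ x ∈ l, IsAtomOf M x) → len l.prod = l.length)
    (c d c' e : M) (hc : c ∈ gs.S) (hd : d ∈ gs.S) (hc' : c' ∈ gs.S)
    (he : e ∈ gs.S) (hcd : c * d = c' * e)
    (hgreedy : IsLeftGcd gs.Δ (c * d) c') :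
    max (len c) (len d) ≤ max (len c') (len e) :=
  stmt_9_general gs hsp len hlen c d c' e hc hd hcd hgreedy
end

section
/- Let B₃ = ⟨a, b | a² = b³⟩ be the 3-strand braid group presented as the (2,3)-torus knot group, and let F₂ = ⟨x, y⟩ be the free group of rank 2. Then the commutator subgroup [B₃, B₃] is isomorphic to F₂. -/
/-!
The trefoil complement fibers over the circle with fiber a punctured torus, so its group
`B₃ = ⟨a, b | a² = b³⟩` is a mapping torus `F₂ ⋊ ℤ`. Concretely, `t = b⁻¹a` (that is, `σ₁`) maps to
a generator of `B₃^ab ≅ ℤ`; with `y = b t⁻²` we get `a = y t³`, `b = y t²`, and the kernel is free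
on `x = t⁻¹ y t` and `y`, with `t` acting by the monodromy `x ↦ y, y ↦ x⁻¹ y`. In any `N ⋊ ℤ` the
commutator subgroup lies in `N`, and equals `N` once the elements `φ(n) n⁻¹` generate `N`; for the
monodromy they include `x⁻¹` and `y x⁻¹`.
-/

/-- The 3-strand braid group presented as the (2,3)-torus knot group
    ⟨a, b | a² = b³⟩ (a = generator 0, b = generator 1). -/
abbrev BraidThree : Type :=
  PresentedGroup ({FreeGroup.of 0 * FreeGroup.of 0 *
    (FreeGroup.of 1 * FreeGroup.of 1 * FreeGroup.of 1)⁻¹} : Set (FreeGroup (Fin 2)))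

namespace SemidirectProduct

variable {N : Type*} [Group N]

open scoped commutatorElement

theorem commutatorElement_inr_inl {G : Type*} [Group G] {φ : G →* MulAut N} (g : G) (n : N) :
    ⁅(inr g : N ⋊[φ] G), (inl n : N ⋊[φ] G)⁆ = inl (φ g n * n⁻¹) := by
  rw [commutatorElement_def, map_mul, inl_aut, map_inv, map_inv]

theorem commutator_eq_range_inl {G : Type*} [CommGroup G] {φ : G →* MulAut N}
    (h : Subgroup.closure {x | ∃ g n, φ g n * n⁻¹ = x} = ⊤) :
    commutator (N ⋊[φ] G) = inl.range := by
  refine le_antisymm ?_ ?_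
  · rw [range_inl_eq_ker_rightHom]
    exact Abelianization.commutator_subset_ker _
  · rw [MonoidHom.range_eq_map, ← h, MonoidHom.map_closure, Subgroup.closure_le]
    rintro _ ⟨_, ⟨g, n, rfl⟩, rfl⟩
    rw [SetLike.mem_coe, ← commutatorElement_inr_inl, commutator_def]
    exact Subgroup.commutator_mem_commutator trivial trivial

end SemidirectProduct

theorem MonoidHom.comp_zpowersHom_eq_conj {N H : Type*} [Group N] [Group H] {α : MulAut N}
    {f : N →* H} {h : H} (hf : ∀ n, f (α n) = h * f n * h⁻¹) (z : Multiplicative ℤ) :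
    f.comp (zpowersHom (MulAut N) α z).toMonoidHom =
      (MulAut.conj (zpowersHom H h z)).toMonoidHom.comp f := by
  ext n
  simp only [zpowersHom_apply, MonoidHom.coe_comp, MulEquiv.coe_toMonoidHom, Function.comp_apply,
    MulAut.conj_apply]
  induction z.toAdd using Int.induction_on generalizing n with
  | zero => simp
  | succ k ih => rw [zpow_add_one, zpow_add_one, MulAut.mul_apply, ih, hf]; group
  | pred k ih =>
    have hf_inv : f (α⁻¹ n) = h⁻¹ * f n * h :=
      calc f (α⁻¹ n) = h⁻¹ * (h * f (α⁻¹ n) * h⁻¹) * h := by group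
        _ = h⁻¹ * f n * h := by rw [← hf, MulAut.apply_inv_self]
    rw [zpow_sub_one, zpow_sub_one, MulAut.mul_apply, ih, hf_inv]
    group

def MulEquiv.commutatorCongr {G H : Type*} [Group G] [Group H] (e : G ≃* H) :
    commutator G ≃* commutator H :=
  (e.subgroupMap _).trans <| MulEquiv.subgroupCongr <| by
    rw [map_commutator_eq, MonoidHom.range_eq_top.2 e.surjective, commutator_def]

namespace BraidThree

open FreeGroup (of)
open SemidirectProduct Multiplicative

def a : BraidThree := PresentedGroup.of 0
def b : BraidThree := PresentedGroup.of 1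

theorem a_mul_a : a * a = b * b * b :=
  PresentedGroup.mk_eq_mk_of_mul_inv_mem <|
    Set.mem_singleton (of 0 * of 0 * (of 1 * of 1 * of 1)⁻¹)

def t : BraidThree := b⁻¹ * a

def y : BraidThree := b * t⁻¹ * t⁻¹

theorem b_mul_t : b * t = a := mul_inv_cancel_left b a

theorem t_mul_b_mul_t : t * b * t = b * b :=
  calc t * b * t = b⁻¹ * (a * a) := by rw [t]; group
    _ = b * b := by rw [a_mul_a]; group

theorem t_mul_y_mul_t_inv : t * y * t⁻¹ = (t⁻¹ * y * t)⁻¹ * y := by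
  have h : b * t⁻¹ = b⁻¹ * t * b :=
    calc b * t⁻¹ = b⁻¹ * (b * b) * t⁻¹ := by group
      _ = b⁻¹ * t * b := by rw [← t_mul_b_mul_t]; group
  calc t * y * t⁻¹ = t * (b * t⁻¹) * t⁻¹ * t⁻¹ := by rw [y]; group
    _ = (t⁻¹ * y * t)⁻¹ * y := by rw [h, y]; group

def monodromy : MulAut (FreeGroup (Fin 2)) :=
  MonoidHom.toMulEquiv (FreeGroup.lift ![of 1, (of 0)⁻¹ * of 1])
    (FreeGroup.lift ![of 0 * (of 1)⁻¹, of 0])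
    (by ext i; fin_cases i <;> simp)
    (by ext i; fin_cases i <;> simp)

@[simp] theorem monodromy_of_zero : monodromy (of 0) = of 1 := by simp [monodromy]

@[simp] theorem monodromy_of_one : monodromy (of 1) = (of 0)⁻¹ * of 1 := by simp [monodromy]

theorem closure_monodromy_mul_inv_eq_top :
    Subgroup.closure {x | ∃ g n, zpowersHom (MulAut _) monodromy g n * n⁻¹ = x} = ⊤ := by
  set S := Subgroup.closure {x | ∃ g n, zpowersHom (MulAut _) monodromy g n * n⁻¹ = x}
  have mem (n : FreeGroup (Fin 2)) : monodromy n * n⁻¹ ∈ S :=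
    Subgroup.subset_closure ⟨ofAdd 1, n, by simp [zpowersHom_apply]⟩
  have of_zero_mem : of 0 ∈ S := by simpa using S.inv_mem (mem (of 1))
  rw [eq_top_iff, ← FreeGroup.closure_range_of, Subgroup.closure_le]
  rintro _ ⟨i, rfl⟩
  fin_cases i
  · exact of_zero_mem
  · simpa using S.mul_mem (mem (of 0)) of_zero_mem

abbrev MappingTorus : Type :=
  FreeGroup (Fin 2) ⋊[zpowersHom (MulAut _) monodromy] Multiplicative ℤ

theorem commutator_mappingTorus : commutator MappingTorus = inl.range :=
  commutator_eq_range_inl closure_monodromy_mul_inv_eq_top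

def toMappingTorus : BraidThree →* MappingTorus :=
  PresentedGroup.toGroup (f := ![inl (of 1) * inr (ofAdd 3), inl (of 1) * inr (ofAdd 2)]) <| by
    rintro _ rfl
    simp only [map_mul, map_inv, FreeGroup.lift_apply_of, mul_inv_eq_one, Matrix.cons_val_zero,
      Matrix.cons_val_one]
    ext
    · simp [mul_left, zpowersHom_apply, pow_succ, mul_assoc]
    · simp [mul_right]

@[simp] theorem toMappingTorus_a : toMappingTorus a = inl (of 1) * inr (ofAdd 3) :=
  PresentedGroup.toGroup.of _

@[simp] theorem toMappingTorus_b : toMappingTorus b = inl (of 1) * inr (ofAdd 2) :=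
  PresentedGroup.toGroup.of _

theorem toMappingTorus_t : toMappingTorus t = inr (ofAdd 1) := by
  ext <;> simp [t, mul_left, mul_right, inv_left, inv_right]

theorem toMappingTorus_y : toMappingTorus y = inl (of 1) := by
  ext <;> simp [y, toMappingTorus_t, mul_left, mul_right, inv_left, inv_right]

def fiberToBraid : FreeGroup (Fin 2) →* BraidThree := FreeGroup.lift ![t⁻¹ * y * t, y]

theorem fiberToBraid_monodromy (n : FreeGroup (Fin 2)) :
    fiberToBraid (monodromy n) = t * fiberToBraid n * t⁻¹ := by
  suffices fiberToBraid.comp monodromy.toMonoidHom =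
      (MulAut.conj t).toMonoidHom.comp fiberToBraid from DFunLike.congr_fun this n
  ext i
  fin_cases i
  · simp [fiberToBraid, mul_assoc]
  · simp [fiberToBraid, t_mul_y_mul_t_inv]

def ofMappingTorus : MappingTorus →* BraidThree :=
  lift fiberToBraid (zpowersHom _ t) (MonoidHom.comp_zpowersHom_eq_conj fiberToBraid_monodromy)

@[simp] theorem ofMappingTorus_inl (n : FreeGroup (Fin 2)) :
    ofMappingTorus (inl n) = fiberToBraid n :=
  lift_inl _ _ _ n

@[simp] theorem ofMappingTorus_inr (k : ℤ) : ofMappingTorus (inr (ofAdd k)) = t ^ k := by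
  simp [ofMappingTorus, zpowersHom_apply]

theorem ofMappingTorus_comp_toMappingTorus :
    ofMappingTorus.comp toMappingTorus = MonoidHom.id _ := by
  ext i
  fin_cases i
  · calc ofMappingTorus (toMappingTorus a) = y * t ^ 3 := by simp [fiberToBraid]
      _ = a := by rw [y, ← b_mul_t]; group
  · calc ofMappingTorus (toMappingTorus b) = y * t ^ 2 := by simp [fiberToBraid]
      _ = b := by rw [y]; group

theorem toMappingTorus_comp_ofMappingTorus :
    toMappingTorus.comp ofMappingTorus = MonoidHom.id _ := by
  refine hom_ext (FreeGroup.ext_hom _ _ fun i => ?_) (MonoidHom.ext_mint ?_)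
  · fin_cases i
    · calc toMappingTorus (ofMappingTorus (inl (of 0)))
          = (inr (ofAdd 1))⁻¹ * inl (of 1) * inr (ofAdd 1) := by
            simp [fiberToBraid, toMappingTorus_t, toMappingTorus_y]
        _ = inl (of 0) := by
          rw [← map_inv, ← inl_aut_inv, inl_inj, zpowersHom_apply, toAdd_ofAdd, zpow_one,
            MulAut.inv_apply, MulEquiv.symm_apply_eq, monodromy_of_zero]
    · simp [fiberToBraid, toMappingTorus_y]
  · simp [toMappingTorus_t]

def mulEquivMappingTorus : BraidThree ≃* MappingTorus :=
  MonoidHom.toMulEquiv toMappingTorus ofMappingTorus ofMappingTorus_comp_toMappingTorus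
    toMappingTorus_comp_ofMappingTorus

end BraidThree

/-- The commutator subgroup [B₃, B₃] is isomorphic to the free group of
    rank 2. -/
theorem stmt_10 :
    Nonempty ((commutator BraidThree) ≃* FreeGroup (Fin 2)) :=
  ⟨BraidThree.mulEquivMappingTorus.commutatorCongr.trans <|
    (MulEquiv.subgroupCongr BraidThree.commutator_mappingTorus).trans
      (MonoidHom.ofInjective SemidirectProduct.inl_injective).symm⟩
end

section
/- In the free group F₂ = ⟨a, b⟩ with automorphism φ given by φ(a) = b, φ(b) = b·a⁻¹·b², the freely reduced word representing φᵐ(b) has length Φ^(2m+1) − Φ^(−(2m+1)) where Φ = (1+√5)/2; equivalently, the lengths satisfy ℓ(0)=1, ℓ(1)=4, ℓ(m)=3ℓ(m−1)−ℓ(m−2). -/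
/-!
Cut φᵐ(b) into the tokens `b` and `b·a⁻¹`. Since φ(b) = (b·a⁻¹)·b·b and
φ(b·a⁻¹) = b·a⁻¹·b²·b⁻¹ = (b·a⁻¹)·b, φ acts on token words by a substitution, so φᵐ(b) is a
positive word in `a⁻¹` and `b`, hence freely reduced, of length `#b + 2·#(b·a⁻¹)`. The token counts
evolve by the matrix `[[2, 1], [1, 1]]`, with characteristic polynomial `X² - 3X + 1`, which gives
`ℓ(m + 2) = 3ℓ(m + 1) - ℓ(m)` with `ℓ(0) = 1`, `ℓ(1) = 4`. Because `Φ - Φ⁻¹ = 1`, both `Φ` and `Φ⁻¹`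
are roots of `X⁴ - 3X² + 1`, so `Φ^(2m+1) - Φ^(-(2m+1))` obeys the same recurrence and initial values.
-/

/-- The endomorphism φ of the free group F₂ = ⟨a, b⟩ (a = of false,
    b = of true) given by φ(a) = b, φ(b) = b·a⁻¹·b². -/
def phiF2 : FreeGroup Bool →* FreeGroup Bool :=
  FreeGroup.lift fun x : Bool =>
    if x then
      FreeGroup.of true * (FreeGroup.of false)⁻¹ *
        FreeGroup.of true * FreeGroup.of true
    else FreeGroup.of true

namespace FreeGroup

variable {α : Type*}

theorem isReduced_of_forall_snd_eq {L : List (α × Bool)} (s : α → Bool)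
    (h : ∀ p ∈ L, p.2 = s p.1) : IsReduced L :=
  (List.pairwise_of_forall_mem_list fun p hp q hq hpq => by rw [h p hp, h q hq, hpq]).isChain

theorem IsReduced.norm_mk [DecidableEq α] {L : List (α × Bool)} (h : IsReduced L) :
    norm (mk L) = L.length := by
  rw [norm, toWord_mk, h.reduce_eq]

end FreeGroup

namespace PhiF2

open FreeGroup hiding map_mul map_inv

/-- `ba` stands for the subword `b·a⁻¹`. -/
inductive Token
  | b
  | ba
  deriving DecidableEq

def Token.letters : Token → List (Bool × Bool)
  | .b => [(true, true)]
  | .ba => [(true, true), (false, false)]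

def Token.subst : Token → List Token
  | .b => [.ba, .b, .b]
  | .ba => [.ba, .b]

def word (L : List Token) : List (Bool × Bool) := L.flatMap Token.letters

theorem isReduced_word (L : List Token) : IsReduced (word L) :=
  isReduced_of_forall_snd_eq id fun p hp => by
    obtain ⟨t, -, hp⟩ := List.mem_flatMap.mp hp
    cases t <;> simp only [Token.letters, List.mem_cons, List.not_mem_nil, or_false] at hp <;>
      rcases hp with rfl | rfl <;> rfl

theorem length_word (L : List Token) :
    (word L).length = L.count .b + 2 * L.count .ba := by
  induction L with
  | nil => rfl
  | cons t L ih => cases t <;> grind [word, Token.letters]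

theorem phiF2_of_true : phiF2 (of true) = of true * (of false)⁻¹ * of true * of true := by
  simp [phiF2]

theorem phiF2_of_false : phiF2 (of false) = of true := by
  simp [phiF2]

theorem phiF2_mk_letters (t : Token) : phiF2 (mk t.letters) = mk (word t.subst) := by
  cases t
  · change phiF2 (of true) = of true * (of false)⁻¹ * of true * of true
    exact phiF2_of_true
  · change phiF2 (of true * (of false)⁻¹) = of true * (of false)⁻¹ * of true
    rw [map_mul, map_inv, phiF2_of_true, phiF2_of_false]
    group

theorem semiconj_mk_word :
    Function.Semiconj (fun L => mk (word L)) (List.flatMap Token.subst) phiF2 := by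
  intro L
  induction L with
  | nil => simp [word, ← one_eq_mk]
  | cons t L ih =>
    simp only [word, List.flatMap_cons, List.flatMap_append, ← mul_mk] at ih ⊢
    rw [ih, map_mul, phiF2_mk_letters, word]

def tokens (m : ℕ) : List Token := (List.flatMap Token.subst)^[m] [.b]

theorem tokens_succ (m : ℕ) : tokens (m + 1) = (tokens m).flatMap Token.subst :=
  Function.iterate_succ_apply' _ _ _

theorem count_b_flatMap_subst (L : List Token) :
    (L.flatMap Token.subst).count .b = 2 * L.count .b + L.count .ba := by
  induction L with
  | nil => rfl
  | cons t L ih => cases t <;> grind [Token.subst]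

theorem count_ba_flatMap_subst (L : List Token) :
    (L.flatMap Token.subst).count .ba = L.count .b + L.count .ba := by
  induction L with
  | nil => rfl
  | cons t L ih => cases t <;> grind [Token.subst]

theorem phiF2_iterate_of_true (m : ℕ) : (⇑phiF2)^[m] (of true) = mk (word (tokens m)) :=
  (semiconj_mk_word.iterate_right m [.b]).symm

theorem norm_phiF2_iterate (m : ℕ) :
    norm ((⇑phiF2)^[m] (of true)) = (tokens m).count .b + 2 * (tokens m).count .ba := by
  rw [phiF2_iterate_of_true, (isReduced_word _).norm_mk, length_word]

theorem norm_phiF2_of_true : norm (phiF2 (of true)) = 4 :=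
  norm_phiF2_iterate 1

theorem norm_phiF2_iterate_add_two (m : ℕ) :
    norm ((⇑phiF2)^[m + 2] (of true)) + norm ((⇑phiF2)^[m] (of true)) =
      3 * norm ((⇑phiF2)^[m + 1] (of true)) := by
  simp only [norm_phiF2_iterate, tokens_succ, count_b_flatMap_subst, count_ba_flatMap_subst]
  ring

end PhiF2

theorem eq_of_linear_recurrence {R : Type*} [Add R] [Mul R] {u v : ℕ → R} (a b : R)
    (hu : ∀ n, u (n + 2) = a * u (n + 1) + b * u n)
    (hv : ∀ n, v (n + 2) = a * v (n + 1) + b * v n) (h0 : u 0 = v 0) (h1 : u 1 = v 1) :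
    u = v := by
  funext n
  induction n using Nat.twoStepInduction with
  | zero => exact h0
  | one => exact h1
  | more n ih₀ ih₁ => rw [hu, hv, ih₀, ih₁]

section GoldenPair

variable {R : Type*} [CommRing R] {x y : R}

theorem pow_three_sub_pow_three_of_mul_eq_one_of_sub_eq_one (hxy : x * y = 1) (hx : x - y = 1) :
    x ^ 3 - y ^ 3 = 4 := by
  linear_combination ((x - y) ^ 2 + (x - y) + 1 + 3 * x * y) * hx + 3 * hxy

theorem pow_odd_sub_pow_odd_add_two_of_mul_eq_one_of_sub_eq_one (hxy : x * y = 1)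
    (hx : x - y = 1) (n : ℕ) :
    x ^ (2 * (n + 2) + 1) - y ^ (2 * (n + 2) + 1) =
      3 * (x ^ (2 * (n + 1) + 1) - y ^ (2 * (n + 1) + 1)) +
        -1 * (x ^ (2 * n + 1) - y ^ (2 * n + 1)) := by
  linear_combination (x ^ (2 * n + 1) * x ^ 2 - y ^ (2 * n + 1) * y ^ 2) * (x - y + 1) * hx
    + (2 * (x ^ (2 * n + 1) * x ^ 2 - y ^ (2 * n + 1) * y ^ 2)
      - (x ^ (2 * n + 1) - y ^ (2 * n + 1)) * (1 + x * y)) * hxy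

end GoldenPair

open Real goldenRatio

/-- The freely reduced word representing φᵐ(b) has length
    Φ^(2m+1) − Φ^(−(2m+1)), where Φ = (1+√5)/2. -/
theorem stmt_12 (m : ℕ) :
    ((FreeGroup.norm ((⇑phiF2)^[m] (FreeGroup.of true))) : ℝ) =
      ((1 + Real.sqrt 5) / 2) ^ (2 * m + 1) -
        (((1 + Real.sqrt 5) / 2)⁻¹) ^ (2 * m + 1) := by
  have hmul : φ * φ⁻¹ = 1 := mul_inv_cancel₀ goldenRatio_ne_zero
  have hsub : φ - φ⁻¹ = 1 := by
    rw [inv_goldenRatio, sub_neg_eq_add, goldenRatio_add_goldenConj]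
  let ℓ : ℕ → ℝ := fun n => FreeGroup.norm ((⇑phiF2)^[n] (FreeGroup.of true))
  let g : ℕ → ℝ := fun n => φ ^ (2 * n + 1) - φ⁻¹ ^ (2 * n + 1)
  suffices ℓ = g from congrFun this m
  refine eq_of_linear_recurrence 3 (-1) (fun n => ?_)
    (pow_odd_sub_pow_odd_add_two_of_mul_eq_one_of_sub_eq_one hmul hsub) ?_ ?_
  · have h := congrArg (Nat.cast : ℕ → ℝ) (PhiF2.norm_phiF2_iterate_add_two n)
    push_cast at h
    linarith
  · change ((FreeGroup.norm (FreeGroup.of true) : ℕ) : ℝ) = φ ^ 1 - φ⁻¹ ^ 1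
    rw [FreeGroup.norm_of, pow_one, pow_one, hsub, Nat.cast_one]
  · change ((FreeGroup.norm (phiF2 (FreeGroup.of true)) : ℕ) : ℝ) = φ ^ 3 - φ⁻¹ ^ 3
    rw [PhiF2.norm_phiF2_of_true, pow_three_sub_pow_three_of_mul_eq_one_of_sub_eq_one hmul hsub]
    norm_num
end

section
/- In the torus knot group T(p,q) = ⟨a, b | aᵖ = bᑫ⟩ with 2 ≤ p < q, the element Δ = aᵖ = bᑫ is central, and the submonoid generated by a and b has the property that the set of left divisors of Δ in the monoid is {1, a, a², …, a^{p−1}, b, b², …, b^{q−1}, Δ} and equals the set of right divisors of Δ. -/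
/-- The torus knot group T(p,q) = ⟨a, b | aᵖ = bᑫ⟩
    (a = of true, b = of false). -/
abbrev TorusKnotGroup (p q : ℕ) : Type :=
  PresentedGroup ({FreeGroup.of true ^ p * (FreeGroup.of false ^ q)⁻¹} :
    Set (FreeGroup Bool))

/-- The generator a of T(p,q). -/
def tkA (p q : ℕ) : TorusKnotGroup p q := PresentedGroup.of true

/-- The generator b of T(p,q). -/
def tkB (p q : ℕ) : TorusKnotGroup p q := PresentedGroup.of false

/-- The positive monoid T⁺(p,q): the submonoid generated by a and b. -/
def tkPos (p q : ℕ) : Submonoid (TorusKnotGroup p q) :=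
  Submonoid.closure {tkA p q, tkB p q}

/-!
Map T(p,q) onto the free product ℤ/p ∗ ℤ/q (a ↦ 1 ∈ ℤ/p, b ↦ 1 ∈ ℤ/q); since Δ is central,
the kernel is ⟨Δ⟩. Give a letter a^k (0 ≤ k < p) of a reduced word the weight kq and a letter
b^k (0 ≤ k < q) the weight kp. The weight of the image of a positive element is at most its
degree (a ↦ q, b ↦ p), while a reduced word and its inverse together weigh pq per letter.
If xy = Δ with x, y positive, the images of x and y are inverse to each other and their degrees
add up to pq, so the image of x is a single letter (or trivial). Hence x = Δ^e a^k or
x = Δ^e b^k, and the degree forces e = 0, or e = 1 and k = 0.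
-/

namespace Monoid.CoprodI

variable {ι : Type*} {G : ι → Type*} [∀ i, Group (G i)]

namespace Word

def inv (w : Word G) : Word G where
  toList := (w.toList.map fun l => ⟨l.1, l.2⁻¹⟩).reverse
  ne_one l hl := by
    obtain ⟨l', hl', rfl⟩ := List.mem_map.mp (List.mem_reverse.mp hl)
    exact inv_ne_one.mpr (w.ne_one l' hl')
  chain_ne := List.isChain_reverse.mpr <|
    List.isChain_map_of_isChain (S := fun l l' : Σ i, G i => l'.1 ≠ l.1) _
      (fun _ _ h => Ne.symm h) w.chain_ne

theorem prod_inv (w : Word G) : w.inv.prod = w.prod⁻¹ := by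
  simp [prod, inv, List.prod_inv_reverse, Function.comp_def]

variable (f : ∀ i, G i → ℕ)

def weight (w : Word G) : ℕ := (w.toList.map fun l => f l.1 l.2).sum

theorem weight_rcons [DecidableEq ι] [∀ i, DecidableEq (G i)] (hf_one : ∀ i, f i 1 = 0) {i : ι}
    (p : Pair G i) : (rcons p).weight f = f i p.head + p.tail.weight f := by
  unfold rcons
  split_ifs with h
  · rw [h, hf_one, zero_add]
  · simp [weight, cons]

variable [DecidableEq ι] [∀ i, DecidableEq (G i)]

theorem equiv_mul (g h : CoprodI G) : equiv (g * h) = g • equiv h :=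
  mul_smul g h (empty : Word G)

theorem prod_equiv (g : CoprodI G) : (equiv g).prod = g := equiv.symm_apply_apply g

theorem equiv_inv (g : CoprodI G) : equiv g⁻¹ = (equiv g).inv := by
  rw [← equiv.eq_symm_apply]
  change g⁻¹ = (equiv g).inv.prod
  rw [prod_inv, prod_equiv]

end Word

variable [DecidableEq ι] [∀ i, DecidableEq (G i)] (f : ∀ i, G i → ℕ)

def weight (g : CoprodI G) : ℕ := (Word.equiv g).weight f

theorem weight_one : weight f (1 : CoprodI G) = 0 := by
  simp [weight, Word.weight, Word.equiv, Word.empty]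

theorem weight_of_mul_le (hf_one : ∀ i, f i 1 = 0)
    (hf_mul : ∀ i (m m' : G i), f i (m * m') ≤ f i m + f i m') {i : ι} (m : G i)
    (g : CoprodI G) :
    weight f (of m * g) ≤ f i m + weight f g := by
  have hg : Word.equiv g = Word.rcons (Word.equivPair i (Word.equiv g)) := by
    rw [← Word.equivPair_symm, Equiv.symm_apply_apply]
  rw [weight, weight, Word.equiv_mul, Word.of_smul_def, Word.weight_rcons f hf_one]
  conv_rhs => rw [hg, Word.weight_rcons f hf_one, ← add_assoc]
  exact Nat.add_le_add_right (hf_mul i _ _) _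

theorem weight_add_weight_inv {N : ℕ} (hf : ∀ i (m : G i), m ≠ 1 → f i m + f i m⁻¹ = N)
    (g : CoprodI G) : weight f g + weight f g⁻¹ = (Word.equiv g).toList.length * N := by
  rw [weight, weight, Word.weight, Word.weight, Word.equiv_inv, Word.inv, List.map_reverse,
    List.sum_reverse, List.map_map, Function.comp_def, ← List.sum_map_add,
    List.map_congr_left (g := fun _ => N) fun l hl => hf l.1 l.2 ((Word.equiv g).ne_one l hl)]
  simp

theorem exists_eq_of_of_weight_add_weight_inv_le [Nonempty ι] {N : ℕ} (hN : 0 < N)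
    (hf : ∀ i (m : G i), m ≠ 1 → f i m + f i m⁻¹ = N) {g : CoprodI G}
    (h : weight f g + weight f g⁻¹ ≤ N) : ∃ i, ∃ m : G i, g = of m := by
  rw [weight_add_weight_inv f hf] at h
  have hlen : (Word.equiv g).toList.length ≤ 1 := by nlinarith
  rw [← Word.prod_equiv g, Word.prod]
  rcases Nat.le_one_iff_eq_zero_or_eq_one.mp hlen with h0 | h1
  · obtain ⟨i⟩ := ‹Nonempty ι›
    exact ⟨i, 1, by simp [List.length_eq_zero_iff.mp h0]⟩
  · obtain ⟨l, hl⟩ := List.length_eq_one_iff.mp h1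
    exact ⟨l.1, l.2, by simp [hl]⟩

end Monoid.CoprodI

theorem Bool.cond_mul_cond_swap {M : Type*} [CommMagma M] (i : Bool) (a b : M) :
    cond i a b * cond i b a = a * b := by
  cases i
  exacts [mul_comm b a, rfl]

theorem Subgroup.mul_eq_comm_of_mem_center {G : Type*} [Group G] {z x y : G}
    (hz : z ∈ Subgroup.center G) : x * y = z ↔ y * x = z := by
  suffices ∀ x y : G, x * y = z → y * x = z from ⟨this x y, this y x⟩
  rintro x y rfl
  have h := Subgroup.mem_center_iff.mp hz x
  rw [mul_assoc] at h
  exact (mul_left_cancel h).symm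

theorem Subgroup.normal_of_le_center {G : Type*} [Group G] {H : Subgroup G}
    (h : H ≤ Subgroup.center G) : H.Normal :=
  ⟨fun n hn g => by rwa [Subgroup.mem_center_iff.mp (h hn) g, mul_inv_cancel_right]⟩

section ZModWeight

variable {ι : Type*} (n w : ι → ℕ)

def zmodLetterWeight (i : ι) (m : Multiplicative (ZMod (n i))) : ℕ :=
  (Multiplicative.toAdd m).val * w i

theorem zmodLetterWeight_one (i : ι) : zmodLetterWeight n w i 1 = 0 := by
  simp [zmodLetterWeight]

theorem zmodLetterWeight_mul_le (i : ι) (m m' : Multiplicative (ZMod (n i))) :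
    zmodLetterWeight n w i (m * m') ≤ zmodLetterWeight n w i m + zmodLetterWeight n w i m' := by
  rw [zmodLetterWeight, zmodLetterWeight, zmodLetterWeight, ← add_mul, toAdd_mul]
  exact Nat.mul_le_mul_right _ (ZMod.val_add_le _ _)

theorem zmodLetterWeight_ofAdd_one_le (i : ι) :
    zmodLetterWeight n w i (Multiplicative.ofAdd 1) ≤ w i := by
  rw [zmodLetterWeight, toAdd_ofAdd]
  have hval : (1 : ZMod (n i)).val ≤ 1 := (ZMod.val_one_eq_one_mod _).trans_le (Nat.mod_le _ _)
  exact (Nat.mul_le_mul_right _ hval).trans_eq (one_mul _)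

theorem zmodLetterWeight_add_inv [∀ i, NeZero (n i)] {i : ι} {m : Multiplicative (ZMod (n i))}
    (hm : m ≠ 1) : zmodLetterWeight n w i m + zmodLetterWeight n w i m⁻¹ = n i * w i := by
  have hm : Multiplicative.toAdd m ≠ 0 := hm
  rw [zmodLetterWeight, zmodLetterWeight, toAdd_inv, ZMod.neg_val, if_neg hm, ← add_mul,
    Nat.add_sub_cancel' (ZMod.val_lt _).le]

end ZModWeight

namespace TorusKnotGroup

open Monoid

variable {p q : ℕ}

variable (p q) in
def gen (i : Bool) : TorusKnotGroup p q := PresentedGroup.of i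

theorem gen_true : gen p q true = tkA p q := rfl

theorem tkA_pow_eq_tkB_pow : tkA p q ^ p = tkB p q ^ q := by
  have h : PresentedGroup.mk _ (FreeGroup.of true ^ p * (FreeGroup.of false ^ q)⁻¹) =
      (1 : TorusKnotGroup p q) :=
    (QuotientGroup.eq_one_iff _).mpr (Subgroup.subset_normalClosure rfl)
  rwa [map_mul, map_inv, map_pow, map_pow, mul_inv_eq_one] at h

theorem gen_pow_cond (i : Bool) : gen p q i ^ cond i p q = tkA p q ^ p := by
  cases i
  · exact tkA_pow_eq_tkB_pow.symm
  · rfl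

theorem tkA_pow_mem_center : tkA p q ^ p ∈ Subgroup.center (TorusKnotGroup p q) := by
  rw [Subgroup.mem_center_iff]
  intro g
  have hgen (i : Bool) : gen p q i ∈ Subgroup.centralizer {tkA p q ^ p} := by
    rw [Subgroup.mem_centralizer_singleton_iff, ← gen_pow_cond i]
    exact (pow_mul_comm' _ _).symm
  exact Subgroup.mem_centralizer_singleton_iff.mp (PresentedGroup.generated_by _ _ hgen g)

theorem gen_mem_tkPos (i : Bool) : gen p q i ∈ tkPos p q := by
  cases i
  · exact Submonoid.subset_closure (Set.mem_insert_of_mem _ rfl)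
  · exact Submonoid.subset_closure (Set.mem_insert _ _)

theorem gen_pow_mul_gen_pow_sub {i : Bool} {k : ℕ} (hk : k ≤ cond i p q) :
    gen p q i ^ k * gen p q i ^ (cond i p q - k) = tkA p q ^ p := by
  rw [← pow_add, Nat.add_sub_cancel' hk, gen_pow_cond]

variable (p q) in
def degree : TorusKnotGroup p q →* Multiplicative ℤ :=
  PresentedGroup.toGroup (f := fun i => Multiplicative.ofAdd (cond i (q : ℤ) p)) <| by
    rintro r rfl
    simp only [map_mul, map_inv, map_pow, FreeGroup.lift_apply_of, cond_true, cond_false,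
      ← ofAdd_nsmul, ← ofAdd_neg, ← ofAdd_add, nsmul_eq_mul, mul_comm, add_neg_cancel,
      ofAdd_zero]

theorem toAdd_degree_gen (i : Bool) :
    Multiplicative.toAdd (degree p q (gen p q i)) = cond i q p := by
  cases i <;> simp [degree, gen, PresentedGroup.toGroup.of]

theorem toAdd_degree_tkA_pow : Multiplicative.toAdd (degree p q (tkA p q ^ p)) = p * q := by
  rw [map_pow, toAdd_pow, ← gen_true, toAdd_degree_gen, nsmul_eq_mul]
  rfl

theorem toAdd_degree_nonneg {x : TorusKnotGroup p q} (hx : x ∈ tkPos p q) :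
    0 ≤ Multiplicative.toAdd (degree p q x) := by
  induction hx using Submonoid.closure_induction with
  | mem z hz =>
    rcases hz with rfl | rfl
    exacts [(toAdd_degree_gen true).symm ▸ Int.natCast_nonneg _,
      (toAdd_degree_gen false).symm ▸ Int.natCast_nonneg _]
  | one => simp
  | mul z w _ _ hz hw => rw [map_mul, toAdd_mul]; omega

variable (p q) in
abbrev CyclicFactor : Bool → Type := fun i => Multiplicative (ZMod (cond i p q))

variable (p q) in
abbrev CyclicFreeProduct : Type := CoprodI (CyclicFactor p q)

theorem of_ofAdd_one_pow (i : Bool) (k : ℕ) :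
    CoprodI.of (M := CyclicFactor p q) (Multiplicative.ofAdd (1 : ZMod (cond i p q))) ^ k =
      CoprodI.of (M := CyclicFactor p q) (Multiplicative.ofAdd (k : ZMod (cond i p q))) := by
  rw [← map_pow, ← ofAdd_nsmul, nsmul_one]

variable (p q) in
def toCyclicFreeProduct : TorusKnotGroup p q →* CyclicFreeProduct p q :=
  PresentedGroup.toGroup
    (f := fun i => CoprodI.of (M := CyclicFactor p q) (i := i) (Multiplicative.ofAdd 1)) <| by
    rintro r rfl
    simp only [map_mul, map_inv, map_pow, FreeGroup.lift_apply_of]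
    rw [of_ofAdd_one_pow true, of_ofAdd_one_pow false]
    simp

theorem toCyclicFreeProduct_gen (i : Bool) :
    toCyclicFreeProduct p q (gen p q i) =
      CoprodI.of (M := CyclicFactor p q) (i := i) (Multiplicative.ofAdd 1) :=
  PresentedGroup.toGroup.of _

theorem toCyclicFreeProduct_gen_pow (i : Bool) (k : ℕ) :
    toCyclicFreeProduct p q (gen p q i ^ k) =
      CoprodI.of (M := CyclicFactor p q) (Multiplicative.ofAdd (k : ZMod (cond i p q))) := by
  rw [map_pow, gen, toCyclicFreeProduct, PresentedGroup.toGroup.of, of_ofAdd_one_pow]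

theorem toCyclicFreeProduct_tkA_pow : toCyclicFreeProduct p q (tkA p q ^ p) = 1 := by
  rw [← gen_true, toCyclicFreeProduct_gen_pow]
  simp

theorem ker_toCyclicFreeProduct_le :
    (toCyclicFreeProduct p q).ker ≤ Subgroup.zpowers (tkA p q ^ p) := by
  let N := Subgroup.zpowers (tkA p q ^ p)
  have : N.Normal := Subgroup.normal_of_le_center (Subgroup.zpowers_le.mpr tkA_pow_mem_center)
  have hord (i : Bool) : zmultiplesHom _ (Additive.ofMul (QuotientGroup.mk' N (gen p q i)))
      (cond i p q : ℕ) = 0 := by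
    rw [zmultiplesHom_apply, natCast_zsmul, ← ofMul_pow, ← map_pow, gen_pow_cond, ofMul_eq_zero,
      QuotientGroup.mk'_apply, QuotientGroup.eq_one_iff]
    exact Subgroup.mem_zpowers _
  let factor (i : Bool) : CyclicFactor p q i →* TorusKnotGroup p q ⧸ N :=
    AddMonoidHom.toMultiplicativeLeft (ZMod.lift _ ⟨_, hord i⟩)
  have hcomp : (CoprodI.lift factor).comp (toCyclicFreeProduct p q) = QuotientGroup.mk' N := by
    refine PresentedGroup.ext fun i => ?_
    rw [MonoidHom.comp_apply, ← gen, ← pow_one (gen p q i), toCyclicFreeProduct_gen_pow,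
      CoprodI.lift_of]
    simp only [factor, AddMonoidHom.toMultiplicativeLeft_apply_apply, toAdd_ofAdd, Nat.cast_one]
    rw [← Int.cast_one, ZMod.lift_coe]
    simp
  intro x hx
  rw [← QuotientGroup.eq_one_iff (N := N), ← QuotientGroup.mk'_apply, ← hcomp,
    MonoidHom.comp_apply, hx, map_one]

instance [NeZero p] [NeZero q] (i : Bool) : NeZero (cond i p q) := by
  cases i <;> assumption

variable (p q) in
abbrev letterWeight : ∀ i, CyclicFactor p q i → ℕ :=
  zmodLetterWeight (fun i => cond i p q) fun i => cond i q p

theorem weight_toCyclicFreeProduct_le_degree {x : TorusKnotGroup p q} (hx : x ∈ tkPos p q) :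
    (CoprodI.weight (letterWeight p q) (toCyclicFreeProduct p q x) : ℤ) ≤
      Multiplicative.toAdd (degree p q x) := by
  induction hx using Submonoid.closure_induction_left with
  | one => simp [CoprodI.weight_one]
  | mul_left z hz y _ ih =>
    have step (i : Bool) :
        (CoprodI.weight (letterWeight p q) (toCyclicFreeProduct p q (gen p q i * y)) : ℤ) ≤
          Multiplicative.toAdd (degree p q (gen p q i * y)) := by
      rw [map_mul, map_mul, toAdd_mul, toAdd_degree_gen, toCyclicFreeProduct_gen]
      have hmul := CoprodI.weight_of_mul_le (letterWeight p q) (zmodLetterWeight_one _ _)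
        (zmodLetterWeight_mul_le _ _) (i := i) (Multiplicative.ofAdd 1) (toCyclicFreeProduct p q y)
      have hgen : letterWeight p q i (Multiplicative.ofAdd 1) ≤ cond i q p :=
        zmodLetterWeight_ofAdd_one_le _ _ i
      omega
    rcases hz with rfl | rfl
    exacts [step true, step false]

theorem exists_eq_zpow_mul_of_toCyclicFreeProduct_eq {x y : TorusKnotGroup p q}
    (h : toCyclicFreeProduct p q x = toCyclicFreeProduct p q y) :
    ∃ e : ℤ, x = (tkA p q ^ p) ^ e * y := by
  have hker : x * y⁻¹ ∈ (toCyclicFreeProduct p q).ker := by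
    rw [MonoidHom.mem_ker, map_mul, map_inv, h, mul_inv_cancel]
  obtain ⟨e, he⟩ := Subgroup.mem_zpowers_iff.mp (ker_toCyclicFreeProduct_le hker)
  exact ⟨e, by rw [he, inv_mul_cancel_right]⟩

theorem eq_gen_pow_or_eq_of_mul_eq [NeZero p] [NeZero q] {x y : TorusKnotGroup p q}
    (hx : x ∈ tkPos p q) (hy : y ∈ tkPos p q) (hxy : x * y = tkA p q ^ p) :
    (∃ i, ∃ k < cond i p q, x = gen p q i ^ k) ∨ x = tkA p q ^ p := by
  have hdeg :
      Multiplicative.toAdd (degree p q x) + Multiplicative.toAdd (degree p q y) = p * q := by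
    rw [← toAdd_mul, ← map_mul, hxy, toAdd_degree_tkA_pow]
  have hinv : toCyclicFreeProduct p q y = (toCyclicFreeProduct p q x)⁻¹ :=
    eq_inv_of_mul_eq_one_right <| by rw [← map_mul, hxy, toCyclicFreeProduct_tkA_pow]
  have hpq : 0 < p * q := Nat.pos_of_ne_zero (mul_ne_zero (NeZero.ne p) (NeZero.ne q))
  have hweight_inv (i : Bool) (m : CyclicFactor p q i) (hm : m ≠ 1) :
      letterWeight p q i m + letterWeight p q i m⁻¹ = p * q := by
    rw [zmodLetterWeight_add_inv (fun i => cond i p q) (fun i => cond i q p) hm,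
      Bool.cond_mul_cond_swap]
  obtain ⟨i, m, hm⟩ := CoprodI.exists_eq_of_of_weight_add_weight_inv_le _ hpq hweight_inv
      (g := toCyclicFreeProduct p q x) <| by
    have := weight_toCyclicFreeProduct_le_degree hx
    have := weight_toCyclicFreeProduct_le_degree hy
    rw [hinv] at this
    omega
  set k := (Multiplicative.toAdd m).val
  have hk : k < cond i p q := ZMod.val_lt _
  obtain ⟨e, rfl⟩ := exists_eq_zpow_mul_of_toCyclicFreeProduct_eq (y := gen p q i ^ k) <| by
    rw [hm, toCyclicFreeProduct_gen_pow, ZMod.natCast_zmod_val]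
    rfl
  have hdeg_x : Multiplicative.toAdd (degree p q ((tkA p q ^ p) ^ e * gen p q i ^ k)) =
      e * (p * q) + (k * cond i q p : ℕ) := by
    rw [map_mul, toAdd_mul, map_zpow, toAdd_zpow, toAdd_degree_tkA_pow, map_pow, toAdd_pow,
      toAdd_degree_gen, smul_eq_mul, nsmul_eq_mul, Nat.cast_mul]
  have hkw : k * cond i q p < p * q := by
    rw [← Bool.cond_mul_cond_swap i p q]
    exact Nat.mul_lt_mul_of_pos_right hk (NeZero.pos _)
  have hx_nonneg := toAdd_degree_nonneg hx
  have hy_nonneg := toAdd_degree_nonneg hy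
  rw [hdeg_x] at hx_nonneg hdeg
  have hkw' : ((k * cond i q p : ℕ) : ℤ) < p * q := by exact_mod_cast hkw
  have hpq' : (0 : ℤ) < p * q := by exact_mod_cast hpq
  obtain rfl | rfl : e = 0 ∨ e = 1 := by
    have : -1 < e := by nlinarith
    have : e < 2 := by nlinarith
    omega
  · exact Or.inl ⟨i, k, hk, by rw [zpow_zero, one_mul]⟩
  · have hk0 : k = 0 := by
      have : k * cond i q p = 0 := by omega
      simpa [NeZero.ne] using this
    exact Or.inr (by rw [hk0, zpow_one, pow_zero, mul_one])

end TorusKnotGroup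

open TorusKnotGroup in
/-- In T(p,q) with 2 ≤ p < q, the element Δ = aᵖ (= bᑫ) is central, its set
    of left divisors in the monoid T⁺(p,q) is
    {1, a, …, a^{p−1}, b, …, b^{q−1}, Δ}, and this set equals the set of its
    right divisors (Δ is balanced). -/
theorem stmt_18 (p q : ℕ) (hp : 2 ≤ p) (hpq : p < q) :
    (∀ g : TorusKnotGroup p q, tkA p q ^ p * g = g * tkA p q ^ p) ∧
    ({x : TorusKnotGroup p q |
        x ∈ tkPos p q ∧ ∃ y ∈ tkPos p q, tkA p q ^ p = x * y} =
      {x : TorusKnotGroup p q |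
        (∃ k < p, x = tkA p q ^ k) ∨ (∃ k < q, x = tkB p q ^ k) ∨
          x = tkA p q ^ p}) ∧
    ({x : TorusKnotGroup p q |
        x ∈ tkPos p q ∧ ∃ y ∈ tkPos p q, tkA p q ^ p = x * y} =
      {x : TorusKnotGroup p q |
        x ∈ tkPos p q ∧ ∃ y ∈ tkPos p q, tkA p q ^ p = y * x}) := by
  have : NeZero p := ⟨by omega⟩
  have : NeZero q := ⟨by omega⟩
  have hcenter := tkA_pow_mem_center (p := p) (q := q)
  have hdiv (i : Bool) {k : ℕ} (hk : k ≤ cond i p q) :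
      gen p q i ^ k ∈ tkPos p q ∧ ∃ y ∈ tkPos p q, tkA p q ^ p = gen p q i ^ k * y :=
    ⟨pow_mem (gen_mem_tkPos i) k, _, pow_mem (gen_mem_tkPos i) _,
      (gen_pow_mul_gen_pow_sub hk).symm⟩
  refine ⟨fun g => (Subgroup.mem_center_iff.mp hcenter g).symm, Set.ext fun x => ⟨?_, ?_⟩,
    Set.ext fun x => ?_⟩
  · rintro ⟨hx, y, hy, hxy⟩
    rcases eq_gen_pow_or_eq_of_mul_eq hx hy hxy.symm with ⟨_ | _, k, hk, rfl⟩ | rfl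
    exacts [Or.inr (Or.inl ⟨k, hk, rfl⟩), Or.inl ⟨k, hk, rfl⟩, Or.inr (Or.inr rfl)]
  · rintro (⟨k, hk, rfl⟩ | ⟨k, hk, rfl⟩ | rfl)
    exacts [hdiv true hk.le, hdiv false hk.le, hdiv true le_rfl]
  · simp only [Set.mem_ofPred_eq, eq_comm (a := tkA p q ^ p),
      Subgroup.mul_eq_comm_of_mem_center hcenter]
end
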